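/- Let X be a measurable space, ℋ a real Hilbert space, φ : X → ℋ a measurable feature map with kernel k(x,x') = ⟨φ(x), φ(x')⟩, and P, Q probability measures on X with E_{x∼P}[‖φ(x)‖²] and E_{y∼Q}[‖φ(y)‖²] finite. Let x_1, …, x_n be i.i.d. from P and y_1, …, y_m be i.i.d. from Q, mutually independent, with n, m ≥ 2. Then the unbiased estimator (1/(n(n−1)))·Σ_{i≠j} k(x_i, x_j) + (1/(m(m−1)))·Σ_{i≠j} k(y_i, y_j) − (2/(nm))·Σ_{i=1}^n Σ_{j=1}^m k(x_i, y_j) has expectation exactly MMD²(P,Q) = ‖μ_P − μ_Q‖²_ℋ. -/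

import Mathlib

/-!
Expand the expectation of the estimator term by term. For `i ≠ j` the coordinates `x i`, `x j`
of an i.i.d. sample have joint law `P ⊗ P`, so Fubini applied to the bilinear map `⟪·, ·⟫` gives
`E ⟪φ (x i), φ (x j)⟫ = ⟪μ_P, μ_P⟫`; likewise every cross term has expectation `⟪μ_P, μ_Q⟫`.
Counting the `n (n - 1)`, `m (m - 1)` and `n m` pairs, the normalisations cancel and what is
left is `‖μ_P‖² + ‖μ_Q‖² - 2 ⟪μ_P, μ_Q⟫ = ‖μ_P - μ_Q‖²`.
-/

open MeasureTheory ProbabilityTheory Finset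
open scoped RealInnerProductSpace

theorem Finset.card_filter_fst_ne_snd {ι : Type*} [Fintype ι] [DecidableEq ι] :
    ((univ : Finset (ι × ι)).filter (fun p => p.1 ≠ p.2)).card =
      Fintype.card ι * Fintype.card ι - Fintype.card ι := by
  have h : (univ : Finset (ι × ι)).filter (fun p => p.1 ≠ p.2) = univ.offDiag := by
    ext; simp [mem_offDiag]
  rw [h, offDiag_card, card_univ]

namespace MeasureTheory

variable {α β ℋ : Type*} [MeasurableSpace α] [MeasurableSpace β]
  [NormedAddCommGroup ℋ] [InnerProductSpace ℝ ℋ]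

theorem Integrable.inner_prod {μ : Measure α} {ν : Measure β} {f : α → ℋ} {g : β → ℋ}
    (hf : Integrable f μ) (hg : Integrable g ν) :
    Integrable (fun z : α × β => ⟪f z.1, g z.2⟫) (μ.prod ν) :=
  hf.op_fst_snd continuous_inner
    ⟨1, fun x y => by simpa using norm_inner_le_norm (𝕜 := ℝ) x y⟩ hg

theorem integral_prod_inner [CompleteSpace ℋ] {μ : Measure α} {ν : Measure β}
    [SFinite μ] [SFinite ν] {f : α → ℋ} {g : β → ℋ} (hf : Integrable f μ) (hg : Integrable g ν) :
    ∫ z, ⟪f z.1, g z.2⟫ ∂μ.prod ν = ⟪∫ x, f x ∂μ, ∫ y, g y ∂ν⟫ :=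
  integral_prod_bilin (innerSL ℝ) hf hg

theorem Measure.pi_map_eval_prodMk_eval {ι : Type*} [Fintype ι] {X : ι → Type*}
    [∀ i, MeasurableSpace (X i)] (μ : ∀ i, Measure (X i)) [∀ i, IsProbabilityMeasure (μ i)]
    {i j : ι} (hij : i ≠ j) :
    (Measure.pi μ).map (fun x => (x i, x j)) = (μ i).prod (μ j) := by
  have h : (fun x : ∀ i, X i => x i) ⟂ᵢ[Measure.pi μ] (fun x => x j) :=
    (iIndepFun_pi (μ := μ) (X := fun _ => id) fun _ => aemeasurable_id).indepFun hij
  rw [indepFun_iff_map_prod_eq_prod_map_map (measurable_pi_apply i).aemeasurable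
    (measurable_pi_apply j).aemeasurable] at h
  simpa [(measurePreserving_eval μ i).map_eq, (measurePreserving_eval μ j).map_eq] using h

section Pi

variable {ι : Type*} [Fintype ι] {X : ι → Type*} [∀ i, MeasurableSpace (X i)]
  {μ : ∀ i, Measure (X i)} [∀ i, IsProbabilityMeasure (μ i)] {i j : ι}
  {f : X i → ℋ} {g : X j → ℋ}

theorem integrable_inner_comp_eval_of_ne (hij : i ≠ j) (hf : Integrable f (μ i))
    (hg : Integrable g (μ j)) :
    Integrable (fun x => ⟪f (x i), g (x j)⟫) (Measure.pi μ) := by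
  have h := hf.inner_prod hg
  rw [← Measure.pi_map_eval_prodMk_eval μ hij] at h
  exact h.comp_measurable ((measurable_pi_apply i).prodMk (measurable_pi_apply j))

theorem integral_inner_comp_eval_of_ne [CompleteSpace ℋ] (hij : i ≠ j) (hf : Integrable f (μ i))
    (hg : Integrable g (μ j)) :
    ∫ x, ⟪f (x i), g (x j)⟫ ∂Measure.pi μ = ⟪∫ x, f x ∂μ i, ∫ y, g y ∂μ j⟫ := by
  have h := (hf.inner_prod hg).aestronglyMeasurable
  rw [← Measure.pi_map_eval_prodMk_eval μ hij] at h
  rw [← integral_prod_inner hf hg, ← Measure.pi_map_eval_prodMk_eval μ hij,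
    integral_map ((measurable_pi_apply i).prodMk (measurable_pi_apply j)).aemeasurable h]

end Pi

section Sample

variable {X : Type*} [MeasurableSpace X] {ι κ : Type*} [Fintype ι] [Fintype κ]
  {P Q : Measure X} [IsProbabilityMeasure P] [IsProbabilityMeasure Q] {φ : X → ℋ}

theorem integrable_sum_filter_ne_inner [DecidableEq ι] (hφ : Integrable φ P) :
    Integrable (fun x => ∑ p ∈ (univ : Finset (ι × ι)).filter (fun p => p.1 ≠ p.2),
      ⟪φ (x p.1), φ (x p.2)⟫) (Measure.pi fun _ => P) :=
  integrable_finsetSum _ fun _ hp => integrable_inner_comp_eval_of_ne (mem_filter.1 hp).2 hφ hφ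

theorem integral_sum_filter_ne_inner [CompleteSpace ℋ] [DecidableEq ι] (hφ : Integrable φ P) :
    ∫ x, ∑ p ∈ (univ : Finset (ι × ι)).filter (fun p => p.1 ≠ p.2),
      ⟪φ (x p.1), φ (x p.2)⟫ ∂Measure.pi (fun _ => P) =
      Fintype.card ι * (Fintype.card ι - 1) * ‖∫ x, φ x ∂P‖ ^ 2 := by
  rw [integral_finsetSum _ fun _ hp => integrable_inner_comp_eval_of_ne (mem_filter.1 hp).2 hφ hφ,
    sum_congr rfl fun _ hp => integral_inner_comp_eval_of_ne (mem_filter.1 hp).2 hφ hφ,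
    sum_const, Finset.card_filter_fst_ne_snd, nsmul_eq_mul, Nat.cast_sub (Nat.le_mul_self _),
    real_inner_self_eq_norm_sq]
  push_cast
  ring

theorem integrable_sum_sum_inner_prod (hP : Integrable φ P) (hQ : Integrable φ Q) :
    Integrable (fun s : (ι → X) × (κ → X) => ∑ i, ∑ j, ⟪φ (s.1 i), φ (s.2 j)⟫)
      ((Measure.pi fun _ => P).prod (Measure.pi fun _ => Q)) :=
  integrable_finsetSum _ fun i _ => integrable_finsetSum _ fun j _ =>
    (integrable_comp_eval (i := i) hP).inner_prod (integrable_comp_eval (i := j) hQ)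

theorem integral_sum_sum_inner_prod [CompleteSpace ℋ] (hP : Integrable φ P) (hQ : Integrable φ Q) :
    ∫ s : (ι → X) × (κ → X), ∑ i, ∑ j, ⟪φ (s.1 i), φ (s.2 j)⟫
      ∂(Measure.pi fun _ => P).prod (Measure.pi fun _ => Q) =
      Fintype.card ι * Fintype.card κ * ⟪∫ x, φ x ∂P, ∫ y, φ y ∂Q⟫ := by
  simp_rw [← inner_sum, ← sum_inner]
  rw [integral_prod_inner (f := fun x : ι → X => ∑ i, φ (x i))
      (g := fun y : κ → X => ∑ j, φ (y j))
      (integrable_finsetSum _ fun i _ => integrable_comp_eval hP)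
      (integrable_finsetSum _ fun j _ => integrable_comp_eval hQ),
    integral_finsetSum _ fun i _ => integrable_comp_eval hP,
    integral_finsetSum _ fun j _ => integrable_comp_eval hQ]
  simp_rw [integral_comp_eval (μ := fun _ => P) hP.aestronglyMeasurable,
    integral_comp_eval (μ := fun _ => Q) hQ.aestronglyMeasurable]
  rw [sum_const, sum_const, card_univ, card_univ, ← Nat.cast_smul_eq_nsmul ℝ,
    ← Nat.cast_smul_eq_nsmul ℝ, real_inner_smul_left, real_inner_smul_right, mul_assoc]

end Sample

end MeasureTheory

theorem unbiased_mmd_estimator_expectation_general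
    {X ℋ : Type*} [MeasurableSpace X]
    [NormedAddCommGroup ℋ] [InnerProductSpace ℝ ℋ] [CompleteSpace ℋ]
    (φ : X → ℋ)
    (P Q : Measure X) [IsProbabilityMeasure P] [IsProbabilityMeasure Q]
    (hPint : Integrable φ P) (hQint : Integrable φ Q)
    (n m : ℕ) (hn : 2 ≤ n) (hm : 2 ≤ m) :
    (∫ s : (Fin n → X) × (Fin m → X),
        ((n * (n - 1) : ℝ))⁻¹ *
            (∑ p ∈ (Finset.univ : Finset (Fin n × Fin n)).filter
                (fun p => p.1 ≠ p.2), ⟪φ (s.1 p.1), φ (s.1 p.2)⟫) +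
          ((m * (m - 1) : ℝ))⁻¹ *
            (∑ p ∈ (Finset.univ : Finset (Fin m × Fin m)).filter
                (fun p => p.1 ≠ p.2), ⟪φ (s.2 p.1), φ (s.2 p.2)⟫) -
          (2 / ((n : ℝ) * m)) *
            (∑ i : Fin n, ∑ j : Fin m, ⟪φ (s.1 i), φ (s.2 j)⟫)
        ∂((Measure.pi fun _ : Fin n => P).prod
            (Measure.pi fun _ : Fin m => Q))) =
      ‖(∫ x, φ x ∂P) - (∫ y, φ y ∂Q)‖ ^ 2 := by
  have hUP := (integrable_sum_filter_ne_inner (ι := Fin n) hPint).comp_fst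
    (Measure.pi fun _ : Fin m => Q)
  have hUQ := (integrable_sum_filter_ne_inner (ι := Fin m) hQint).comp_snd
    (Measure.pi fun _ : Fin n => P)
  have hV := integrable_sum_sum_inner_prod (ι := Fin n) (κ := Fin m) hPint hQint
  rw [integral_sub ((hUP.const_mul _).fun_add (hUQ.const_mul _)) (hV.const_mul _),
    integral_add (hUP.const_mul _) (hUQ.const_mul _), integral_const_mul, integral_const_mul,
    integral_const_mul, integral_prod _ hUP, integral_prod _ hUQ]
  simp only [integral_const, probReal_univ, one_smul]
  rw [integral_sum_filter_ne_inner hPint, integral_sum_filter_ne_inner hQint,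
    integral_sum_sum_inner_prod hPint hQint, Fintype.card_fin, Fintype.card_fin,
    norm_sub_sq_real]
  have hn1 : (n : ℝ) - 1 ≠ 0 := by
    have : (2 : ℝ) ≤ n := by exact_mod_cast hn
    linarith
  have hm1 : (m : ℝ) - 1 ≠ 0 := by
    have : (2 : ℝ) ≤ m := by exact_mod_cast hm
    linarith
  field_simp
  ring

/-- The unbiased empirical MMD² estimator (U-statistic form) has expectation
exactly MMD²(P,Q) = ‖μ_P − μ_Q‖² for independent i.i.d. samples x ∼ P^n,
y ∼ Q^m with n, m ≥ 2. -/
theorem unbiased_mmd_estimator_expectation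
    {X ℋ : Type*} [MeasurableSpace X]
    [NormedAddCommGroup ℋ] [InnerProductSpace ℝ ℋ] [CompleteSpace ℋ]
    [MeasurableSpace ℋ] [BorelSpace ℋ]
    (φ : X → ℋ) (hφ : Measurable φ)
    (P Q : Measure X) [IsProbabilityMeasure P] [IsProbabilityMeasure Q]
    (hPint : Integrable φ P) (hQint : Integrable φ Q)
    (hP2 : Integrable (fun x => ‖φ x‖ ^ 2) P)
    (hQ2 : Integrable (fun y => ‖φ y‖ ^ 2) Q)
    (n m : ℕ) (hn : 2 ≤ n) (hm : 2 ≤ m) :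
    (∫ s : (Fin n → X) × (Fin m → X),
        ((n * (n - 1) : ℝ))⁻¹ *
            (∑ p ∈ (Finset.univ : Finset (Fin n × Fin n)).filter
                (fun p => p.1 ≠ p.2), ⟪φ (s.1 p.1), φ (s.1 p.2)⟫) +
          ((m * (m - 1) : ℝ))⁻¹ *
            (∑ p ∈ (Finset.univ : Finset (Fin m × Fin m)).filter
                (fun p => p.1 ≠ p.2), ⟪φ (s.2 p.1), φ (s.2 p.2)⟫) -
          (2 / ((n : ℝ) * m)) *
            (∑ i : Fin n, ∑ j : Fin m, ⟪φ (s.1 i), φ (s.2 j)⟫)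
        ∂((Measure.pi fun _ : Fin n => P).prod
            (Measure.pi fun _ : Fin m => Q))) =
      ‖(∫ x, φ x ∂P) - (∫ y, φ y ∂Q)‖ ^ 2 :=
  unbiased_mmd_estimator_expectation_general φ P Q hPint hQint n m hn hm
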